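/- arXiv:1305.3972 — 2 statements merged into one kernel-verified Lean document; each statement's English description precedes it below -/
import Mathlib

section
/- Let S be a finite set of primes and, for each p ∈ S, let F_p and G_p be polynomials with complex coefficients satisfying F_p(0) = G_p(0) = 1. If there is a real number σ_0 such that ∏_{p ∈ S} F_p(p^{-s}) = ∏_{p ∈ S} G_p(p^{-s}) for all complex s with Re(s) > σ_0, then F_p = G_p for every p ∈ S. Equivalently, if the meromorphic function ∏_{p ∈ S} F_p(p^{-s})/G_p(p^{-s}) is nonvanishing and pole-free on all of ℂ, then F_p = G_p for every p ∈ S. -/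
open Complex Finset

/-!
Substituting `X_p = p^{-s}` turns the polynomial `∏_{p ∈ S} F_p(X_p)` in one variable per prime
into a finite Dirichlet polynomial, in which the monomial `∏ X_p^{e_p}` contributes to the
coefficient of `n^{-s}` with `n = ∏ p^{e_p}`. By unique factorization (equivalently, the
`ℚ`-linear independence of the `log p`) distinct monomials give distinct `n`, so uniqueness of
Dirichlet series coefficients forces `∏ F_p(X_p) = ∏ G_p(X_p)` as polynomials. Setting `X_q = 0`
for `q ≠ p` then recovers `F_p = G_p`, because `F_q(0) = G_q(0) = 1`.
-/

open Filter MvPolynomial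

lemma Complex.natCast_finset_prod_cpow {ι : Type*} (t : Finset ι) (f : ι → ℕ) (s : ℂ) :
    ((∏ i ∈ t, f i : ℕ) : ℂ) ^ s = ∏ i ∈ t, (f i : ℂ) ^ s := by
  induction t using Finset.cons_induction with
  | empty => simp
  | cons i t hi ih => rw [prod_cons, prod_cons, Nat.cast_mul, natCast_mul_natCast_cpow, ih]

lemma Complex.natCast_finsuppProd_pow_cpow (d : ℕ →₀ ℕ) (s : ℂ) :
    ((d.prod (· ^ ·) : ℕ) : ℂ) ^ s = ∏ p ∈ d.support, ((p : ℂ) ^ s) ^ d p := by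
  rw [Finsupp.prod, natCast_finset_prod_cpow]
  refine prod_congr rfl fun p _ => ?_
  rw [Nat.cast_pow, ← natCast_cpow_natCast_mul, cpow_nat_mul]

namespace MvPolynomial

lemma term_coeff_factorization_eq_zero (P : MvPolynomial ℕ ℂ) {s : ℂ} {n : ℕ}
    (hn : n ∉ P.support.image (fun d => d.prod (· ^ ·))) :
    LSeries.term (fun n => P.coeff n.factorization) s n = 0 := by
  rw [LSeries.term_def]
  split_ifs with h0
  · rfl
  · rw [notMem_support_iff.mp fun h => hn (mem_image.mpr
      ⟨_, h, Nat.prod_factorization_pow_eq_self h0⟩), zero_div]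

lemma abscissaOfAbsConv_coeff_factorization_lt_top (P : MvPolynomial ℕ ℂ) :
    LSeries.abscissaOfAbsConv (fun n => P.coeff n.factorization) < ⊤ :=
  (LSeries.abscissaOfAbsConv_le_of_forall_lt_LSeriesSummable (x := 0) fun _ _ =>
    summable_of_ne_finset_zero fun _ => term_coeff_factorization_eq_zero P).trans_lt
      (EReal.coe_lt_top 0)

lemma LSeries_coeff_factorization {P : MvPolynomial ℕ ℂ} (hP : P ∈ supported ℂ {p | p.Prime})
    (s : ℂ) :
    LSeries (fun n => P.coeff n.factorization) s = eval (fun p : ℕ => (p : ℂ) ^ (-s)) P := by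
  have hprime : ∀ d ∈ P.support, ∀ p ∈ d.support, p.Prime := fun d hd p hp =>
    mem_supported.mp hP ((mem_vars_iff_mem_support p).mpr ⟨d, hd, hp⟩)
  rw [LSeries, tsum_eq_sum fun _ => term_coeff_factorization_eq_zero P, sum_image, eval_eq]
  · refine sum_congr rfl fun d hd => ?_
    have hd0 : d.prod (· ^ ·) ≠ 0 :=
      Finset.prod_ne_zero_iff.mpr fun p hp => pow_ne_zero _ (hprime d hd p hp).ne_zero
    rw [LSeries.term_of_ne_zero hd0, Nat.prod_pow_factorization_eq_self (hprime d hd),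
      div_eq_mul_inv, ← cpow_neg, natCast_finsuppProd_pow_cpow]
  · intro d hd d' hd' h
    rw [← Nat.prod_pow_factorization_eq_self (hprime d hd),
      ← Nat.prod_pow_factorization_eq_self (hprime d' hd')]
    exact congrArg Nat.factorization h

theorem eq_of_eval_natCast_cpow_neg_eventuallyEq {P Q : MvPolynomial ℕ ℂ}
    (hP : P ∈ supported ℂ {p | p.Prime}) (hQ : Q ∈ supported ℂ {p | p.Prime})
    (h : ∀ᶠ s : ℝ in atTop,
      eval (fun p : ℕ => (p : ℂ) ^ (-(s : ℂ))) P = eval (fun p : ℕ => (p : ℂ) ^ (-(s : ℂ))) Q) :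
    P = Q := by
  have hcoeff : ∀ n ≠ 0, P.coeff n.factorization = Q.coeff n.factorization := fun n hn =>
    LSeries.eq_of_LSeries_eventually_eq (abscissaOfAbsConv_coeff_factorization_lt_top P)
      (abscissaOfAbsConv_coeff_factorization_lt_top Q)
      (by simpa only [EventuallyEq, LSeries_coeff_factorization hP,
        LSeries_coeff_factorization hQ]) hn
  ext d
  by_cases hd : ∀ p ∈ d.support, p.Prime
  · rw [← Nat.prod_pow_factorization_eq_self hd]
    exact hcoeff _ (Finset.prod_ne_zero_iff.mpr fun p hp => pow_ne_zero _ (hd p hp).ne_zero)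
  · push Not at hd
    obtain ⟨p, hpd, hp⟩ := hd
    have coeff_eq_zero : ∀ R ∈ supported ℂ {p | p.Prime}, R.coeff d = 0 := fun R hR =>
      notMem_support_iff.mp fun hdR =>
        hp (mem_supported.mp hR ((mem_vars_iff_mem_support p).mpr ⟨d, hdR, hpd⟩))
    rw [coeff_eq_zero P hP, coeff_eq_zero Q hQ]

end MvPolynomial

/-- `∏_{p ∈ S} F_p(X_p)`: the Euler product with `p^{-s}` replaced by an indeterminate `X_p`. -/
noncomputable def eulerMvPoly {R : Type*} [CommSemiring R] (S : Finset ℕ) (F : ℕ → Polynomial R) :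
    MvPolynomial ℕ R :=
  ∏ p ∈ S, Polynomial.aeval (X p) (F p)

section eulerMvPoly

variable {R : Type*} [CommSemiring R] (S : Finset ℕ) (F : ℕ → Polynomial R)

lemma map_eulerMvPoly {A : Type*} [CommSemiring A] [Algebra R A]
    (φ : MvPolynomial ℕ R →ₐ[R] A) :
    φ (eulerMvPoly S F) = ∏ p ∈ S, Polynomial.aeval (φ (X p)) (F p) := by
  simp only [eulerMvPoly, map_prod, Polynomial.aeval_algHom_apply]

lemma eval_eulerMvPoly (x : ℕ → R) :
    eval x (eulerMvPoly S F) = ∏ p ∈ S, (F p).eval (x p) :=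
  (map_eulerMvPoly S F (aeval x)).trans <| by simp only [aeval_X, Polynomial.coe_aeval_eq_eval]

lemma eulerMvPoly_mem_supported [Nontrivial R] : eulerMvPoly S F ∈ supported R (S : Set ℕ) :=
  Subalgebra.prod_mem _ fun _ hp =>
    Algebra.adjoin_singleton_le (X_mem_supported.mpr hp) (Polynomial.aeval_mem_adjoin_singleton R _)

lemma aeval_eulerMvPoly_single {p : ℕ} (hp : p ∈ S) (hF0 : ∀ q ∈ S, (F q).eval 0 = 1) :
    aeval (fun q => if q = p then Polynomial.X else 0) (eulerMvPoly S F) = F p := by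
  rw [map_eulerMvPoly, prod_eq_single_of_mem p hp]
  · simp only [aeval_X, if_pos, Polynomial.aeval_X_left_apply]
  · intro q hq hqp
    rw [aeval_X, if_neg hqp, ← Polynomial.coeff_zero_eq_aeval_zero',
      Polynomial.coeff_zero_eq_eval_zero, hF0 q hq, map_one]

end eulerMvPoly

/-- A finite product of Euler factors determines the factors: if `S` is a finite set of
primes, `F_p, G_p` are polynomials with `F_p(0) = G_p(0) = 1`, and
`∏_{p ∈ S} F_p(p^(-s)) = ∏_{p ∈ S} G_p(p^(-s))` on some right half-plane `Re(s) > σ₀`, then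
`F_p = G_p` for every `p ∈ S`.  (The key input is that `{log p : p prime}` is linearly
independent over `ℚ`.) -/
theorem finite_euler_product_determines_factors
    (S : Finset ℕ) (hS : ∀ p ∈ S, Nat.Prime p)
    (F G : ℕ → Polynomial ℂ)
    (hF0 : ∀ p ∈ S, (F p).eval 0 = 1) (hG0 : ∀ p ∈ S, (G p).eval 0 = 1)
    (σ₀ : ℝ)
    (heq : ∀ s : ℂ, σ₀ < s.re →
      ∏ p ∈ S, (F p).eval ((p : ℂ) ^ (-s)) = ∏ p ∈ S, (G p).eval ((p : ℂ) ^ (-s))) :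
    ∀ p ∈ S, F p = G p := by
  have hprime (H : ℕ → Polynomial ℂ) : eulerMvPoly S H ∈ supported ℂ {p | p.Prime} :=
    supported_mono hS (eulerMvPoly_mem_supported S H)
  have hFG : eulerMvPoly S F = eulerMvPoly S G :=
    eq_of_eval_natCast_cpow_neg_eventuallyEq (hprime F) (hprime G) <|
      (eventually_gt_atTop σ₀).mono fun s hs => by
        simpa only [eval_eulerMvPoly] using heq s (by rwa [ofReal_re])
  intro p hp
  rw [← aeval_eulerMvPoly_single S F hp hF0, ← aeval_eulerMvPoly_single S G hp hG0, hFG]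
end

section
/- Let μ_{1,1},…,μ_{J_1,1} and μ_{1,2},…,μ_{J_2,2} be complex numbers with real part in {0,1}, and let ν_{1,1},…,ν_{K_1,1} and ν_{1,2},…,ν_{K_2,2} be complex numbers whose real parts are positive integers or positive half-integers. Suppose that the meromorphic function G(s) = [∏_{j=1}^{J_1} Γ_ℝ(s + μ_{j,1}) · ∏_{k=1}^{K_1} Γ_ℂ(s + ν_{k,1})] / [∏_{j=1}^{J_2} Γ_ℝ(s + μ_{j,2}) · ∏_{k=1}^{K_2} Γ_ℂ(s + ν_{k,2})] extends to an entire function on ℂ with no zeros. Then J_1 = J_2, K_1 = K_2, the multiset {μ_{j,1} : 1 ≤ j ≤ J_1} equals the multiset {μ_{j,2} : 1 ≤ j ≤ J_2}, the multiset {ν_{k,1} : 1 ≤ k ≤ K_1} equals the multiset {ν_{k,2} : 1 ≤ k ≤ K_2}, and consequently G is identically 1. -/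
/-!
The reciprocals `1/Γ_ℝ(s + a)` and `1/Γ_ℂ(s + b)` are entire, with simple zeros exactly at
`s ∈ -a - 2ℕ` and `s ∈ -b - ℕ`. As `g · (1/numerator) = 1/denominator` off a countable set, hence
everywhere by continuity, and `g` is entire without zeros, the two reciprocal products vanish to the
same order at every point. Comparing these orders at `-w` and `-w + 2` gives
`#A₁(w) + #B₁(w) + #B₁(w - 1) = #A₂(w) + #B₂(w) + #B₂(w - 1)`, where `#A(w)` and `#B(w)` are the
multiplicities of `w` among the `μ`'s and the `ν`'s. Since `Re μ ≤ 1`, for `Re w > 0` the difference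
`#B₁ - #B₂` changes sign from `w` to `w + 1`; as it vanishes for large `Re w`, it vanishes for all
`Re w > 0`, and since `Re ν > 0` also for `Re w ≤ 0`. Then `#A₁ = #A₂` as well.
-/

open Complex Finset

noncomputable section

/-- The normalized Gamma factor `Γ_ℝ(s) = π^(-s/2) Γ(s/2)`. -/
def GammaR (s : ℂ) : ℂ := (Real.pi : ℂ) ^ (-s / 2) * Complex.Gamma (s / 2)

/-- The normalized Gamma factor `Γ_ℂ(s) = 2 (2π)^(-s) Γ(s)`. -/
def GammaC (s : ℂ) : ℂ := 2 * (2 * (Real.pi : ℂ)) ^ (-s) * Complex.Gamma s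

theorem Multiset.sum_map_ite_one_zero {α R : Type*} [AddCommMonoidWithOne R] (p : α → Prop)
    [DecidablePred p] (A : Multiset α) :
    (A.map fun a => if p a then (1 : R) else 0).sum = A.countP p := by
  induction A using Multiset.induction_on with
  | empty => simp
  | cons a A ih => by_cases h : p a <;> simp [h, ih, add_comm]

section AnalyticOrder

variable {𝕜 : Type*} [NontriviallyNormedField 𝕜]

theorem analyticOrderAt_mul_of_ne_zero {f g : 𝕜 → 𝕜} {z : 𝕜} (hf : AnalyticAt 𝕜 f z)
    (hg : AnalyticAt 𝕜 g z) (hfz : f z ≠ 0) :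
    analyticOrderAt (f * g) z = analyticOrderAt g z := by
  rw [analyticOrderAt_mul hf hg, analyticOrderAt_eq_zero.mpr (Or.inr hfz), zero_add]

theorem analyticOrderAt_comp_add_const [CompleteSpace 𝕜] [CharZero 𝕜] {E : Type*}
    [NormedAddCommGroup E] [NormedSpace 𝕜 E] (f : 𝕜 → E) (a z : 𝕜) :
    analyticOrderAt (fun s => f (s + a)) z = analyticOrderAt f (z + a) :=
  analyticOrderAt_comp_of_deriv_ne_zero (g := (· + a)) (by fun_prop) (by simp)

variable {ι : Type*} {f : ι → 𝕜 → 𝕜} {z : 𝕜}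

theorem Multiset.analyticAt_prod_map (A : Multiset ι) (hf : ∀ i ∈ A, AnalyticAt 𝕜 (f i) z) :
    AnalyticAt 𝕜 (fun s => (A.map (f · s)).prod) z := by
  induction A using Multiset.induction_on with
  | empty => simpa using analyticAt_const
  | cons a A ih =>
    simp only [Multiset.map_cons, Multiset.prod_cons]
    exact (hf a (Multiset.mem_cons_self a A)).mul
      (ih fun i hi => hf i (Multiset.mem_cons_of_mem hi))

theorem Multiset.analyticOrderAt_prod_map (A : Multiset ι) (hf : ∀ i ∈ A, AnalyticAt 𝕜 (f i) z) :
    analyticOrderAt (fun s => (A.map (f · s)).prod) z =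
      (A.map fun i => analyticOrderAt (f i) z).sum := by
  induction A using Multiset.induction_on with
  | empty =>
    simp only [Multiset.map_zero, Multiset.prod_zero, Multiset.sum_zero]
    exact analyticOrderAt_eq_zero.mpr (Or.inr one_ne_zero)
  | cons a A ih =>
    have hA : ∀ i ∈ A, AnalyticAt 𝕜 (f i) z := fun i hi => hf i (Multiset.mem_cons_of_mem hi)
    simp only [Multiset.map_cons, Multiset.prod_cons, Multiset.sum_cons, ← ih hA]
    exact analyticOrderAt_mul (hf a (Multiset.mem_cons_self a A)) (A.analyticAt_prod_map hA)

end AnalyticOrder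

theorem Complex.exists_inv_Gamma_eq_mul (n : ℕ) :
    ∃ h : ℂ → ℂ, Differentiable ℂ h ∧ h (-n) ≠ 0 ∧ ∀ s, (Gamma s)⁻¹ = (s + n) * h s := by
  induction n with
  | zero =>
    refine ⟨fun s => (Gamma (s + 1))⁻¹, differentiable_one_div_Gamma.comp (by fun_prop), ?_, ?_⟩
    · simp
    · simpa using one_div_Gamma_eq_self_mul_one_div_Gamma_add_one
  | succ n ih =>
    obtain ⟨h, hd, hn, heq⟩ := ih
    refine ⟨fun s => s * h (s + 1), by fun_prop, ?_, fun s => ?_⟩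
    · have : -((n + 1 : ℕ) : ℂ) + 1 = -n := by push_cast; ring
      simp only [this]
      exact mul_ne_zero (by norm_cast) hn
    · rw [one_div_Gamma_eq_self_mul_one_div_Gamma_add_one, heq]
      push_cast
      ring

open Classical in
theorem Complex.analyticOrderAt_inv_Gamma (z : ℂ) :
    analyticOrderAt (fun s => (Gamma s)⁻¹) z = if ∃ n : ℕ, z = -n then 1 else 0 := by
  split_ifs with hz
  · obtain ⟨n, rfl⟩ := hz
    obtain ⟨h, hd, hn, heq⟩ := exists_inv_Gamma_eq_mul n
    have : (fun s => (Gamma s)⁻¹) = (· - -(n : ℂ)) * h := by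
      ext s
      simp [heq]
    rw [this, analyticOrderAt_mul (by fun_prop) (hd.analyticAt _),
      analyticOrderAt_id_sub_const_self, analyticOrderAt_eq_zero.mpr (Or.inr hn), add_zero]
  · exact analyticOrderAt_eq_zero.mpr (Or.inr (inv_ne_zero (Gamma_ne_zero fun m hm => hz ⟨m, hm⟩)))

theorem Complex.ofReal_pi_ne_zero : (Real.pi : ℂ) ≠ 0 := ofReal_ne_zero.mpr Real.pi_ne_zero

theorem exists_div_two_eq_neg_natCast_iff (s : ℂ) :
    (∃ n : ℕ, s / 2 = -n) ↔ ∃ n : ℕ, s = -(2 * n) :=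
  exists_congr fun _ => ⟨fun h => by linear_combination 2 * h, fun h => by linear_combination h / 2⟩

theorem GammaR_eq_zero_iff (s : ℂ) : GammaR s = 0 ↔ ∃ n : ℕ, s = -(2 * n) := by
  simp [GammaR, Gamma_eq_zero_iff, exists_div_two_eq_neg_natCast_iff]

theorem GammaC_eq_zero_iff (s : ℂ) : GammaC s = 0 ↔ ∃ n : ℕ, s = -n := by
  simp [GammaC, Gamma_eq_zero_iff]

theorem inv_GammaR (s : ℂ) : (GammaR s)⁻¹ = (Real.pi : ℂ) ^ (s / 2) * (Gamma (s / 2))⁻¹ := by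
  rw [GammaR, mul_inv, neg_div, cpow_neg, inv_inv]

theorem inv_GammaC (s : ℂ) : (GammaC s)⁻¹ = 2⁻¹ * (2 * (Real.pi : ℂ)) ^ s * (Gamma s)⁻¹ := by
  rw [GammaC, mul_inv, mul_inv, cpow_neg, inv_inv]

theorem differentiable_pi_cpow_div_two : Differentiable ℂ fun s : ℂ => (Real.pi : ℂ) ^ (s / 2) :=
  (differentiable_id.div_const 2).const_cpow (Or.inl ofReal_pi_ne_zero)

theorem differentiable_two_pi_cpow :
    Differentiable ℂ fun s : ℂ => 2⁻¹ * (2 * (Real.pi : ℂ)) ^ s :=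
  have h2π : 2 * (Real.pi : ℂ) ≠ 0 := mul_ne_zero two_ne_zero ofReal_pi_ne_zero
  (differentiable_fun_id.const_cpow (Or.inl h2π)).const_mul _

theorem differentiable_inv_GammaR : Differentiable ℂ fun s => (GammaR s)⁻¹ := by
  simp_rw [inv_GammaR]
  exact differentiable_pi_cpow_div_two.mul
    (differentiable_one_div_Gamma.comp (differentiable_id.div_const 2))

theorem differentiable_inv_GammaC : Differentiable ℂ fun s => (GammaC s)⁻¹ := by
  simp_rw [inv_GammaC]
  exact differentiable_two_pi_cpow.mul differentiable_one_div_Gamma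

open Classical in
theorem analyticOrderAt_inv_GammaR (z : ℂ) :
    analyticOrderAt (fun s => (GammaR s)⁻¹) z = if ∃ n : ℕ, z = -(2 * n) then 1 else 0 := by
  have : (fun s => (GammaR s)⁻¹) =
      (fun s : ℂ => (Real.pi : ℂ) ^ (s / 2)) * ((fun s => (Gamma s)⁻¹) ∘ (· / 2)) := by
    ext s
    simp [inv_GammaR]
  rw [this, analyticOrderAt_mul_of_ne_zero (differentiable_pi_cpow_div_two.analyticAt z)
      ((differentiable_one_div_Gamma.comp (by fun_prop)).analyticAt z) (by simp),
    analyticOrderAt_comp_of_deriv_ne_zero (by fun_prop) (by simp), analyticOrderAt_inv_Gamma]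
  simp only [exists_div_two_eq_neg_natCast_iff]

open Classical in
theorem analyticOrderAt_inv_GammaC (z : ℂ) :
    analyticOrderAt (fun s => (GammaC s)⁻¹) z = if ∃ n : ℕ, z = -n then 1 else 0 := by
  have : (fun s => (GammaC s)⁻¹) =
      (fun s : ℂ => 2⁻¹ * (2 * (Real.pi : ℂ)) ^ s) * fun s => (Gamma s)⁻¹ := by
    ext s
    simp [inv_GammaC]
  rw [this, analyticOrderAt_mul_of_ne_zero (differentiable_two_pi_cpow.analyticAt z)
      (differentiable_one_div_Gamma.analyticAt z) (by simp), analyticOrderAt_inv_Gamma]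

open Classical in
def ladderCount (d : ℂ) (A : Multiset ℂ) (z : ℂ) : ℕ :=
  A.countP fun a => ∃ n : ℕ, z + a = -(d * n)

theorem ladderCount_eq {d : ℂ} (hd : d ≠ 0) (A : Multiset ℂ) (z : ℂ) :
    ladderCount d A z = A.count (-z) + ladderCount d A (z + d) := by
  induction A using Multiset.induction_on with
  | empty => simp [ladderCount]
  | cons a A ih =>
    have hsplit : (∃ n : ℕ, z + a = -(d * n)) ↔ (-z = a ∨ ∃ n : ℕ, z + d + a = -(d * n)) := by
      constructor
      · rintro ⟨_ | n, hn⟩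
        · left
          push_cast at hn
          linear_combination -hn
        · right
          exact ⟨n, by push_cast at hn; linear_combination hn⟩
      · rintro (rfl | ⟨n, hn⟩)
        · exact ⟨0, by simp⟩
        · exact ⟨n + 1, by push_cast; linear_combination hn⟩
    have hdisj : ¬(-z = a ∧ ∃ n : ℕ, z + d + a = -(d * n)) := by
      rintro ⟨rfl, n, hn⟩
      exact mul_ne_zero hd (Nat.cast_add_one_ne_zero n) (by linear_combination hn)
    simp only [ladderCount, Multiset.countP_cons, Multiset.count_cons] at ih ⊢
    split_ifs <;> first | omega | tauto

def poleOrder (A B : Multiset ℂ) (z : ℂ) : ℕ := ladderCount 2 A z + ladderCount 1 B z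

theorem poleOrder_neg_eq (A B : Multiset ℂ) (w : ℂ) :
    poleOrder A B (-w) = A.count w + B.count w + B.count (w - 1) + poleOrder A B (-w + 2) := by
  have hB := ladderCount_eq one_ne_zero B (-w + 1)
  rw [show -w + 1 + 1 = -w + 2 by ring, show -(-w + 1) = w - 1 by ring] at hB
  rw [poleOrder, poleOrder, ladderCount_eq two_ne_zero A, ladderCount_eq one_ne_zero B, hB, neg_neg]
  omega

theorem Complex.decreasing_induction_re {P : ℂ → Prop} {c R : ℝ} (hR : ∀ w, R ≤ w.re → P w)
    (hstep : ∀ w, c < w.re → P (w + 1) → P w) {w : ℂ} (hw : c < w.re) : P w := by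
  obtain ⟨N, hN⟩ := exists_nat_ge (R - w.re)
  induction N generalizing w with
  | zero => exact hR w (by push_cast at hN; linarith)
  | succ N ih =>
    refine hstep w hw (ih (by simp; linarith) ?_)
    push_cast at hN
    simp only [add_re, one_re]
    linarith

theorem eq_of_poleOrder_eq {A₁ A₂ B₁ B₂ : Multiset ℂ}
    (hA₁ : ∀ a ∈ A₁, a.re ≤ 1) (hA₂ : ∀ a ∈ A₂, a.re ≤ 1)
    (hB₁ : ∀ b ∈ B₁, 0 < b.re) (hB₂ : ∀ b ∈ B₂, 0 < b.re)
    (h : ∀ z, poleOrder A₁ B₁ z = poleOrder A₂ B₂ z) : A₁ = A₂ ∧ B₁ = B₂ := by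
  have hcount : ∀ w, A₁.count w + B₁.count w + B₁.count (w - 1) =
      A₂.count w + B₂.count w + B₂.count (w - 1) := by
    intro w
    have := h (-w)
    rw [poleOrder_neg_eq, poleOrder_neg_eq, h (-w + 2)] at this
    omega
  have hB : B₁ = B₂ := by
    obtain ⟨R, hR⟩ := ((B₁ + B₂).toFinset.image re).exists_le
    refine Multiset.ext.mpr fun w => ?_
    rcases le_or_gt w.re 0 with hw | hw
    · rw [Multiset.count_eq_zero.mpr fun hb => (hB₁ w hb).not_ge hw,
        Multiset.count_eq_zero.mpr fun hb => (hB₂ w hb).not_ge hw]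
    refine Complex.decreasing_induction_re (P := fun v => B₁.count v = B₂.count v) (R := R + 1)
      (fun v hv => ?_) (fun v hv hv1 => ?_) hw
    · have hvB : v ∉ B₁ + B₂ := fun hb => by
        linarith [hR v.re (Finset.mem_image_of_mem _ (Multiset.mem_toFinset.mpr hb))]
      rw [Multiset.count_eq_zero.mpr fun hb => hvB (Multiset.mem_add.mpr (Or.inl hb)),
        Multiset.count_eq_zero.mpr fun hb => hvB (Multiset.mem_add.mpr (Or.inr hb))]
    · have hv' : 1 < (v + 1).re := by simp; linarith
      have := hcount (v + 1)
      rw [Multiset.count_eq_zero.mpr fun ha => (hA₁ _ ha).not_gt hv',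
        Multiset.count_eq_zero.mpr fun ha => (hA₂ _ ha).not_gt hv', add_sub_cancel_right] at this
      omega
  refine ⟨Multiset.ext.mpr fun w => ?_, hB⟩
  have := hcount w
  rw [hB] at this
  omega

def gammaFactor (A B : Multiset ℂ) (s : ℂ) : ℂ :=
  (A.map fun a => GammaR (s + a)).prod * (B.map fun b => GammaC (s + b)).prod

theorem gammaFactor_ofFn {J K : ℕ} (μ : Fin J → ℂ) (ν : Fin K → ℂ) (s : ℂ) :
    gammaFactor ↑(List.ofFn μ) ↑(List.ofFn ν) s =
      (∏ j, GammaR (s + μ j)) * ∏ k, GammaC (s + ν k) := by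
  simp [gammaFactor, List.prod_ofFn]

theorem inv_gammaFactor (A B : Multiset ℂ) (s : ℂ) :
    (gammaFactor A B s)⁻¹ =
      (A.map fun a => (GammaR (s + a))⁻¹).prod * (B.map fun b => (GammaC (s + b))⁻¹).prod := by
  rw [gammaFactor, mul_inv, Multiset.prod_map_inv, Multiset.prod_map_inv]

theorem analyticAt_inv_GammaR_add (a z : ℂ) : AnalyticAt ℂ (fun s => (GammaR (s + a))⁻¹) z :=
  (differentiable_inv_GammaR.comp (differentiable_id.add_const a)).analyticAt z

theorem analyticAt_inv_GammaC_add (b z : ℂ) : AnalyticAt ℂ (fun s => (GammaC (s + b))⁻¹) z :=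
  (differentiable_inv_GammaC.comp (differentiable_id.add_const b)).analyticAt z

theorem analyticAt_inv_gammaFactor (A B : Multiset ℂ) (z : ℂ) :
    AnalyticAt ℂ (fun s => (gammaFactor A B s)⁻¹) z := by
  simp_rw [inv_gammaFactor]
  exact (A.analyticAt_prod_map fun a _ => analyticAt_inv_GammaR_add a z).mul
    (B.analyticAt_prod_map fun b _ => analyticAt_inv_GammaC_add b z)

theorem continuous_inv_gammaFactor (A B : Multiset ℂ) :
    Continuous fun s => (gammaFactor A B s)⁻¹ :=
  continuous_iff_continuousAt.mpr fun z => (analyticAt_inv_gammaFactor A B z).continuousAt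

open Classical in
theorem analyticOrderAt_inv_gammaFactor (A B : Multiset ℂ) (z : ℂ) :
    analyticOrderAt (fun s => (gammaFactor A B s)⁻¹) z = poleOrder A B z := by
  have hR (a : ℂ) : analyticOrderAt (fun s => (GammaR (s + a))⁻¹) z =
      if ∃ n : ℕ, z + a = -(2 * n) then 1 else 0 :=
    (analyticOrderAt_comp_add_const (fun s => (GammaR s)⁻¹) a z).trans
      (analyticOrderAt_inv_GammaR _)
  have hC (b : ℂ) : analyticOrderAt (fun s => (GammaC (s + b))⁻¹) z =
      if ∃ n : ℕ, z + b = -(1 * n) then 1 else 0 := by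
    simp_rw [one_mul]
    exact (analyticOrderAt_comp_add_const (fun s => (GammaC s)⁻¹) b z).trans
      (analyticOrderAt_inv_GammaC _)
  rw [show (fun s => (gammaFactor A B s)⁻¹) = (fun s => (A.map fun a => (GammaR (s + a))⁻¹).prod) *
      fun s => (B.map fun b => (GammaC (s + b))⁻¹).prod from funext (inv_gammaFactor A B),
    analyticOrderAt_mul (A.analyticAt_prod_map fun a _ => analyticAt_inv_GammaR_add a z)
      (B.analyticAt_prod_map fun b _ => analyticAt_inv_GammaC_add b z),
    A.analyticOrderAt_prod_map fun a _ => analyticAt_inv_GammaR_add a z,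
    B.analyticOrderAt_prod_map fun b _ => analyticAt_inv_GammaC_add b z]
  simp only [hR, hC, Multiset.sum_map_ite_one_zero, poleOrder, ladderCount, Nat.cast_add]

theorem countable_setOf_gammaFactor_eq_zero (A B : Multiset ℂ) :
    {s | gammaFactor A B s = 0}.Countable := by
  refine ((A + B).toFinset.countable_toSet.biUnion
    fun c _ => Set.countable_range fun n : ℕ => -(n : ℂ) - c).mono fun s hs => ?_
  simp only [gammaFactor, Set.mem_ofPred_eq, mul_eq_zero, Multiset.prod_eq_zero_iff,
    Multiset.mem_map, GammaR_eq_zero_iff, GammaC_eq_zero_iff] at hs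
  simp only [Set.mem_iUnion, Set.mem_range, Finset.mem_coe, Multiset.mem_toFinset,
    Multiset.mem_add]
  rcases hs with ⟨a, ha, n, hn⟩ | ⟨b, hb, n, hn⟩
  · exact ⟨a, Or.inl ha, 2 * n, by push_cast; linear_combination -hn⟩
  · exact ⟨b, Or.inr hb, n, by linear_combination -hn⟩

theorem Continuous.ext_on_gammaFactor_ne_zero {A₁ B₁ A₂ B₂ : Multiset ℂ} {f₁ f₂ : ℂ → ℂ}
    (hf₁ : Continuous f₁) (hf₂ : Continuous f₂)
    (h : ∀ s, gammaFactor A₁ B₁ s ≠ 0 → gammaFactor A₂ B₂ s ≠ 0 → f₁ s = f₂ s) : f₁ = f₂ := by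
  refine Continuous.ext_on (((countable_setOf_gammaFactor_eq_zero A₁ B₁).union
    (countable_setOf_gammaFactor_eq_zero A₂ B₂)).dense_compl ℂ) hf₁ hf₂ fun s hs => ?_
  simp only [Set.mem_compl_iff, Set.mem_union, Set.mem_ofPred_eq, not_or] at hs
  exact h s hs.1 hs.2

theorem poleOrder_eq_of_mul_inv_gammaFactor {A₁ B₁ A₂ B₂ : Multiset ℂ} {g : ℂ → ℂ}
    (hg : Differentiable ℂ g) (hgne : ∀ s, g s ≠ 0)
    (h : ∀ s, g s * (gammaFactor A₁ B₁ s)⁻¹ = (gammaFactor A₂ B₂ s)⁻¹) (z : ℂ) :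
    poleOrder A₁ B₁ z = poleOrder A₂ B₂ z := by
  have := analyticOrderAt_mul_of_ne_zero (hg.analyticAt z) (analyticAt_inv_gammaFactor A₁ B₁ z)
    (hgne z)
  rw [show g * (fun s => (gammaFactor A₁ B₁ s)⁻¹) = fun s => (gammaFactor A₂ B₂ s)⁻¹ from funext h,
    analyticOrderAt_inv_gammaFactor, analyticOrderAt_inv_gammaFactor] at this
  exact_mod_cast this.symm

/-- **Rigidity of Γ-factors.** Suppose `Re(μ_{j,i}) ∈ {0,1}` and each `Re(ν_{k,i})` is a
positive integer or half-integer, and the quotient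
`G(s) = [∏_j Γ_ℝ(s+μ_{j,1}) ∏_k Γ_ℂ(s+ν_{k,1})] / [∏_j Γ_ℝ(s+μ_{j,2}) ∏_k Γ_ℂ(s+ν_{k,2})]`
extends to an entire function `g` with no zeros (the extension agrees with the quotient
wherever numerator and denominator are both free of Γ-poles, i.e. nonzero).  Then
`J₁ = J₂`, `K₁ = K₂`, the multisets of `μ`'s and of `ν`'s agree, and `g ≡ 1`. -/
theorem gamma_factor_rigidity
    (J₁ J₂ K₁ K₂ : ℕ) (μ₁ : Fin J₁ → ℂ) (μ₂ : Fin J₂ → ℂ)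
    (ν₁ : Fin K₁ → ℂ) (ν₂ : Fin K₂ → ℂ)
    (hμ₁ : ∀ j, (μ₁ j).re = 0 ∨ (μ₁ j).re = 1)
    (hμ₂ : ∀ j, (μ₂ j).re = 0 ∨ (μ₂ j).re = 1)
    (hν₁ : ∀ k, ∃ n : ℕ, 1 ≤ n ∧ (ν₁ k).re = n / 2)
    (hν₂ : ∀ k, ∃ n : ℕ, 1 ≤ n ∧ (ν₂ k).re = n / 2)
    (g : ℂ → ℂ) (hg : Differentiable ℂ g) (hgne : ∀ s, g s ≠ 0)
    (hext : ∀ s : ℂ,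
      (∏ j, GammaR (s + μ₁ j)) * (∏ k, GammaC (s + ν₁ k)) ≠ 0 →
      (∏ j, GammaR (s + μ₂ j)) * (∏ k, GammaC (s + ν₂ k)) ≠ 0 →
      g s = ((∏ j, GammaR (s + μ₁ j)) * (∏ k, GammaC (s + ν₁ k)))
          / ((∏ j, GammaR (s + μ₂ j)) * (∏ k, GammaC (s + ν₂ k)))) :
    J₁ = J₂ ∧ K₁ = K₂ ∧
    (↑(List.ofFn μ₁) : Multiset ℂ) = ↑(List.ofFn μ₂) ∧
    (↑(List.ofFn ν₁) : Multiset ℂ) = ↑(List.ofFn ν₂) ∧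
    ∀ s : ℂ, g s = 1 := by
  simp only [← gammaFactor_ofFn] at hext
  set A₁ : Multiset ℂ := ↑(List.ofFn μ₁)
  set A₂ : Multiset ℂ := ↑(List.ofFn μ₂)
  set B₁ : Multiset ℂ := ↑(List.ofFn ν₁)
  set B₂ : Multiset ℂ := ↑(List.ofFn ν₂)
  have hre_μ : ∀ {J} {μ : Fin J → ℂ}, (∀ j, (μ j).re = 0 ∨ (μ j).re = 1) →
      ∀ a ∈ (↑(List.ofFn μ) : Multiset ℂ), a.re ≤ 1 := by
    rintro J μ hμ _ ha
    obtain ⟨j, rfl⟩ := List.mem_ofFn.mp ha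
    rcases hμ j with h | h <;> simp [h]
  have hre_ν : ∀ {K} {ν : Fin K → ℂ}, (∀ k, ∃ n : ℕ, 1 ≤ n ∧ (ν k).re = n / 2) →
      ∀ b ∈ (↑(List.ofFn ν) : Multiset ℂ), 0 < b.re := by
    rintro K ν hν _ hb
    obtain ⟨k, rfl⟩ := List.mem_ofFn.mp hb
    obtain ⟨n, hn, h⟩ := hν k
    rw [h]
    exact div_pos (by exact_mod_cast hn) two_pos
  have hmul : ∀ s, g s * (gammaFactor A₁ B₁ s)⁻¹ = (gammaFactor A₂ B₂ s)⁻¹ :=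
    congrFun (Continuous.ext_on_gammaFactor_ne_zero
      (hg.continuous.mul (continuous_inv_gammaFactor _ _)) (continuous_inv_gammaFactor _ _)
      fun s h₁ h₂ => by
        rw [hext s h₁ h₂, div_mul_eq_mul_div, mul_inv_cancel₀ h₁, one_div])
  obtain ⟨hμ, hν⟩ : A₁ = A₂ ∧ B₁ = B₂ :=
    eq_of_poleOrder_eq (hre_μ hμ₁) (hre_μ hμ₂) (hre_ν hν₁) (hre_ν hν₂)
      (poleOrder_eq_of_mul_inv_gammaFactor hg hgne hmul)
  refine ⟨by simpa [A₁, A₂] using congrArg Multiset.card hμ,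
    by simpa [B₁, B₂] using congrArg Multiset.card hν, hμ, hν, congrFun ?_⟩
  rw [hμ, hν] at hext
  exact hg.continuous.ext_on_gammaFactor_ne_zero (A₂ := A₂) (B₂ := B₂) continuous_const
    fun s h _ => (hext s h h).trans (div_self h)
end
end
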